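/- Suppose a measurable kernel \(P_s(u,v)\ge 0\) on \(\mathbb{H}^n\times\mathbb{H}^n\) satisfies, for some constants \(C_N,A>0\) and \(N\ge 1\), the bound \(P_s(u,v) \le C_N s^{-Q/2}\exp(-|v^{-1}u|^2/(As))(1+\sqrt{s}/\rho(u))^{-N}\) for all \(s>0\), where \(\rho:\mathbb{H}^n\to(0,\infty)\). Then for \(0<\alpha<Q\) the kernel \(\mathcal K_\alpha(u,v) = \frac{1}{\Gamma(\alpha/2)}\int_0^\infty P_s(u,v)\, s^{\alpha/2-1}\,ds\) satisfies \(|\mathcal K_\alpha(u,v)| \le C_{N,\alpha}\left(1+\frac{|v^{-1}u|}{\rho(u)}\right)^{-N}\frac{1}{|v^{-1}u|^{Q-\alpha}}\) for all \(u\ne v\). -/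

import Mathlib

open MeasureTheory Real Set

noncomputable section

abbrev Heis (n : ℕ) := (Fin n → ℂ) × ℝ

def Hmul {n : ℕ} (u v : Heis n) : Heis n :=
  (u.1 + v.1, u.2 + v.2 + 2 * (∑ j, u.1 j * (starRingEnd ℂ) (v.1 j)).im)

def Hinv {n : ℕ} (u : Heis n) : Heis n := (-u.1, -u.2)

/-- The homogeneous norm `|(z,t)| = (|z|⁴ + t²)^{1/4}`, with `|z|` the Euclidean norm. -/
def Hnorm {n : ℕ} (u : Heis n) : ℝ :=
  ((∑ j, ‖u.1 j‖ ^ 2) ^ 2 + u.2 ^ 2) ^ ((1 : ℝ) / 4)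

def Hball {n : ℕ} (u₀ : Heis n) (r : ℝ) : Set (Heis n) :=
  {v | Hnorm (Hmul (Hinv v) u₀) < r}

/-! With `d = |v⁻¹u|`, the elementary inequality `1 + d/ρ ≤ (1 + d/√s)(1 + √s/ρ)` moves the decay
factor from `√s/ρ(u)` to `d/ρ(u)` at the cost of `(1 + d/√s)^N ≤ 2^(N-1) (1 + d^N s^(-N/2))`.
The integrand is then dominated by `(1 + d/ρ(u))^(-N)` times two terms
`s^(-r-1) e^(-d²/(As))` with `r > 0`; the substitution `s ↦ 1/s` turns each into a Gamma integral,
`Γ(r) (A/d²)^r`, and both come out proportional to `d^(α-Q)`. -/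

lemma Hnorm_pos {n : ℕ} {w : Heis n} (hw : w ≠ 0) : 0 < Hnorm w := by
  refine rpow_pos_of_pos ?_ _
  by_contra! h
  have hsum : ∑ j, ‖w.1 j‖ ^ 2 = 0 := by nlinarith [sq_nonneg (∑ j, ‖w.1 j‖ ^ 2), sq_nonneg w.2]
  have h2 : w.2 = 0 := by nlinarith [sq_nonneg (∑ j, ‖w.1 j‖ ^ 2), sq_nonneg w.2]
  have h1 : w.1 = 0 := funext fun j => by
    simpa using (Finset.sum_eq_zero_iff_of_nonneg (fun i _ => sq_nonneg ‖w.1 i‖)).mp hsum j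
      (Finset.mem_univ j)
  exact hw (Prod.ext h1 h2)

lemma Hmul_Hinv_ne_zero {n : ℕ} {u v : Heis n} (h : u ≠ v) : Hmul (Hinv v) u ≠ 0 := by
  intro h0
  have h1 : u.1 = v.1 := by
    have := congrArg Prod.fst h0
    simp only [Hmul, Hinv, Prod.fst_zero] at this
    linear_combination this
  have him : ∀ j, ((-v.1) j * (starRingEnd ℂ) (u.1 j)).im = 0 := fun j => by
    simp [h1, Complex.mul_conj]
  have h2 : u.2 = v.2 := by
    have := congrArg Prod.snd h0
    simp only [Hmul, Hinv, Prod.snd_zero, Complex.im_sum, him, Finset.sum_const_zero] at this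
    linarith
  exact h (Prod.ext h1 h2)

-- The Gamma integrand composed with `s ↦ s⁻¹`, times the Jacobian `s⁻²`.
lemma rpow_mul_exp_neg_div_eq_comp_inv {q c s : ℝ} (hs : 0 < s) :
    s ^ ((-1 : ℝ) - 1) * ((s ^ (-1 : ℝ)) ^ (q - 1) * Real.exp (-(c * s ^ (-1 : ℝ)))) =
      s ^ (-q - 1) * Real.exp (-c / s) := by
  rw [rpow_neg_one, ← rpow_neg_one, ← rpow_mul hs.le, ← mul_assoc, ← rpow_add hs,
    rpow_neg_one, ← div_eq_mul_inv, neg_div]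
  ring_nf

theorem integrableOn_rpow_mul_exp_neg_div {q c : ℝ} (hq : 0 < q) (hc : 0 < c) :
    IntegrableOn (fun s : ℝ => s ^ (-q - 1) * Real.exp (-c / s)) (Ioi 0) := by
  refine ((integrableOn_Ioi_comp_rpow_iff' _ (p := -1) (by norm_num)).mpr
    (integrableOn_rpow_mul_exp_neg_mul_rpow (s := q - 1) (by linarith) one_pos hc)).congr_fun
    (fun s hs => ?_) measurableSet_Ioi
  simp only [smul_eq_mul, rpow_one, neg_mul]
  exact rpow_mul_exp_neg_div_eq_comp_inv hs

theorem integral_rpow_mul_exp_neg_div {q c : ℝ} (hq : 0 < q) (hc : 0 < c) :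
    ∫ s in Ioi 0, s ^ (-q - 1) * Real.exp (-c / s) = (1 / c) ^ q * Gamma q := by
  rw [← integral_rpow_mul_exp_neg_mul_Ioi hq hc,
    ← integral_comp_rpow_Ioi (fun t => t ^ (q - 1) * Real.exp (-(c * t))) (p := -1) (by norm_num)]
  refine setIntegral_congr_fun measurableSet_Ioi (fun s hs => ?_)
  rw [smul_eq_mul, abs_neg, abs_one, one_mul]
  exact (rpow_mul_exp_neg_div_eq_comp_inv hs).symm

lemma one_add_div_le_mul_one_add_div {a b c : ℝ} (ha : 0 ≤ a) (hb : 0 < b) (hc : 0 < c) :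
    1 + a / c ≤ (1 + a / b) * (1 + b / c) := by
  have hab : a / b * (b / c) = a / c := by field_simp
  nlinarith [div_nonneg ha hb.le, div_nonneg hb.le hc.le]

lemma one_add_div_rpow_neg_le {d r t N : ℝ} (hd : 0 ≤ d) (hr : 0 < r) (ht : 0 < t) (hN : 0 ≤ N) :
    (1 + t / r) ^ (-N) ≤ (1 + d / t) ^ N * (1 + d / r) ^ (-N) := by
  rw [rpow_neg (by positivity), rpow_neg (by positivity), ← div_eq_mul_inv, inv_eq_one_div,
    div_le_div_iff₀ (by positivity) (by positivity), one_mul,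
    ← mul_rpow (by positivity) (by positivity)]
  exact rpow_le_rpow (by positivity) (one_add_div_le_mul_one_add_div hd ht hr) hN

lemma one_add_rpow_le {x N : ℝ} (hx : 0 ≤ x) (hN : 1 ≤ N) :
    (1 + x) ^ N ≤ 2 ^ (N - 1) * (1 + x ^ N) := by
  lift x to NNReal using hx
  have h := NNReal.rpow_add_le_mul_rpow_add_rpow 1 x hN
  rw [NNReal.one_rpow] at h
  exact_mod_cast h

lemma one_div_div_sq_rpow {A d r : ℝ} (hA : 0 < A) (hd : 0 < d) :
    (1 / (d ^ 2 / A)) ^ r = A ^ r * d ^ (-2 * r) := by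
  rw [one_div_div, div_rpow hA.le (by positivity), ← rpow_natCast, ← rpow_mul hd.le, neg_mul,
    rpow_neg hd.le, div_eq_mul_inv]
  norm_num

def kernelMajorant (q N A d s : ℝ) : ℝ :=
  s ^ (-q - 1) * Real.exp (-(d ^ 2 / A) / s) +
    d ^ N * (s ^ (-(q + N / 2) - 1) * Real.exp (-(d ^ 2 / A) / s))

lemma mul_rpow_le_kernelMajorant {x CN Q α A N d r s : ℝ} (hN : 1 ≤ N) (hCN : 0 ≤ CN)
    (hd : 0 ≤ d) (hr : 0 < r) (hs : 0 < s)
    (hx : x ≤ CN * s ^ (-(Q / 2)) * Real.exp (-d ^ 2 / (A * s)) * (1 + √s / r) ^ (-N)) :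
    x * s ^ (α / 2 - 1) ≤
      CN * 2 ^ (N - 1) * (1 + d / r) ^ (-N) * kernelMajorant ((Q - α) / 2) N A d s := by
  have hsqrt : 0 < √s := sqrt_pos.mpr hs
  have hpeetre : (1 + √s / r) ^ (-N) ≤ 2 ^ (N - 1) * (1 + (d / √s) ^ N) * (1 + d / r) ^ (-N) :=
    (one_add_div_rpow_neg_le hd hr hsqrt (by linarith)).trans
      (by gcongr; exact one_add_rpow_le (by positivity) hN)
  have hratio : (d / √s) ^ N = d ^ N * s ^ (-(N / 2)) := by
    rw [div_rpow hd hsqrt.le, sqrt_eq_rpow, ← rpow_mul hs.le, rpow_neg hs.le, div_eq_mul_inv]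
    ring_nf
  have hpow₁ : s ^ (-(Q / 2)) * s ^ (α / 2 - 1) = s ^ (-((Q - α) / 2) - 1) := by
    rw [← rpow_add hs]; ring_nf
  have hpow₂ : s ^ (-((Q - α) / 2) - 1) * s ^ (-(N / 2)) = s ^ (-((Q - α) / 2 + N / 2) - 1) := by
    rw [← rpow_add hs]; ring_nf
  have hexp : -d ^ 2 / (A * s) = -(d ^ 2 / A) / s := by rw [neg_div, neg_div, div_div]
  calc x * s ^ (α / 2 - 1)
      ≤ CN * s ^ (-(Q / 2)) * Real.exp (-d ^ 2 / (A * s)) * (1 + √s / r) ^ (-N) *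
          s ^ (α / 2 - 1) := by gcongr
    _ ≤ CN * s ^ (-(Q / 2)) * Real.exp (-d ^ 2 / (A * s)) *
          (2 ^ (N - 1) * (1 + (d / √s) ^ N) * (1 + d / r) ^ (-N)) * s ^ (α / 2 - 1) := by gcongr
    _ = CN * 2 ^ (N - 1) * (1 + d / r) ^ (-N) * kernelMajorant ((Q - α) / 2) N A d s := by
        rw [kernelMajorant, hratio, ← hpow₂, ← hpow₁, hexp]; ring

lemma integrableOn_kernelMajorant {q N A d : ℝ} (hq : 0 < q) (hN : 0 ≤ N) (hA : 0 < A)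
    (hd : 0 < d) : IntegrableOn (kernelMajorant q N A d) (Ioi 0) :=
  (integrableOn_rpow_mul_exp_neg_div hq (by positivity)).add
    ((integrableOn_rpow_mul_exp_neg_div (by positivity) (by positivity)).const_mul _)

lemma integral_kernelMajorant {q N A d : ℝ} (hq : 0 < q) (hN : 0 ≤ N) (hA : 0 < A)
    (hd : 0 < d) :
    ∫ s in Ioi 0, kernelMajorant q N A d s =
      (A ^ q * Gamma q + A ^ (q + N / 2) * Gamma (q + N / 2)) * d ^ (-2 * q) := by
  have hq' : 0 < q + N / 2 := by positivity
  simp only [kernelMajorant]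
  rw [integral_add (integrableOn_rpow_mul_exp_neg_div hq (by positivity))
      ((integrableOn_rpow_mul_exp_neg_div hq' (by positivity)).const_mul _),
    integral_const_mul, integral_rpow_mul_exp_neg_div hq (by positivity),
    integral_rpow_mul_exp_neg_div hq' (by positivity), one_div_div_sq_rpow hA hd,
    one_div_div_sq_rpow hA hd]
  have hd_pow : d ^ N * d ^ (-2 * (q + N / 2)) = d ^ (-2 * q) := by
    rw [← rpow_add hd]; ring_nf
  linear_combination (A ^ (q + N / 2) * Gamma (q + N / 2)) * hd_pow

lemma setIntegral_le_of_le_kernelMajorant {f : ℝ → ℝ} {a q N A d : ℝ} (hq : 0 < q) (hN : 0 ≤ N)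
    (hA : 0 < A) (hd : 0 < d) (hf₀ : ∀ s, 0 < s → 0 ≤ f s)
    (hf : ∀ s, 0 < s → f s ≤ a * kernelMajorant q N A d s) :
    ∫ s in Ioi 0, f s ≤
      a * ((A ^ q * Gamma q + A ^ (q + N / 2) * Gamma (q + N / 2)) * d ^ (-2 * q)) := by
  rw [← integral_kernelMajorant hq hN hA hd, ← integral_const_mul]
  exact integral_mono_of_nonneg ((ae_restrict_iff' measurableSet_Ioi).mpr (.of_forall hf₀))
    ((integrableOn_kernelMajorant hq hN hA hd).const_mul _)
    ((ae_restrict_iff' measurableSet_Ioi).mpr (.of_forall hf))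

theorem schrodinger_fractional_kernel_bound_general (n : ℕ) (Q : ℝ)
    (α : ℝ) (hαQ : α < Q)
    (ρ : Heis n → ℝ) (hρ : ∀ u, 0 < ρ u) (A : ℝ) (hA : 0 < A)
    (N : ℝ) (hN : 1 ≤ N) (CN : ℝ) (hCN : 0 < CN)
    (P : ℝ → Heis n → Heis n → ℝ)
    (hP0 : ∀ s (u v : Heis n), 0 < s → 0 ≤ P s u v)
    (hPbound : ∀ s (u v : Heis n), 0 < s →
      P s u v ≤ CN * s ^ (-(Q / 2)) * Real.exp (-(Hnorm (Hmul (Hinv v) u)) ^ 2 / (A * s)) *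
        (1 + Real.sqrt s / ρ u) ^ (-N)) :
    ∃ C > 0, ∀ u v : Heis n, u ≠ v →
      |(1 / Real.Gamma (α / 2)) * ∫ s in Ioi (0 : ℝ), P s u v * s ^ (α / 2 - 1)| ≤
        C * (1 + Hnorm (Hmul (Hinv v) u) / ρ u) ^ (-N) *
          Hnorm (Hmul (Hinv v) u) ^ (α - Q) := by
  have hq : 0 < (Q - α) / 2 := by linarith
  set K := A ^ ((Q - α) / 2) * Gamma ((Q - α) / 2) +
    A ^ ((Q - α) / 2 + N / 2) * Gamma ((Q - α) / 2 + N / 2)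
  have hK : 0 ≤ K := by
    have := Gamma_pos_of_pos hq
    have := Gamma_pos_of_pos (show 0 < (Q - α) / 2 + N / 2 by positivity)
    positivity
  set c := |1 / Gamma (α / 2)| * (CN * 2 ^ (N - 1) * K)
  refine ⟨c + 1, by positivity, fun u v huv => ?_⟩
  set d := Hnorm (Hmul (Hinv v) u)
  have hd : 0 < d := Hnorm_pos (Hmul_Hinv_ne_zero huv)
  have hB : 0 ≤ (1 + d / ρ u) ^ (-N) := by have := hρ u; positivity
  have hintegrand_nonneg : ∀ s, 0 < s → 0 ≤ P s u v * s ^ (α / 2 - 1) :=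
    fun s hs => mul_nonneg (hP0 s u v hs) (by positivity)
  have hint_le := setIntegral_le_of_le_kernelMajorant hq (by linarith) hA hd hintegrand_nonneg
    fun s hs => mul_rpow_le_kernelMajorant hN hCN.le hd.le (hρ u) hs (hPbound s u v hs)
  rw [show -2 * ((Q - α) / 2) = α - Q by ring] at hint_le
  rw [abs_mul, abs_of_nonneg (setIntegral_nonneg measurableSet_Ioi hintegrand_nonneg)]
  calc |1 / Gamma (α / 2)| * ∫ s in Ioi (0 : ℝ), P s u v * s ^ (α / 2 - 1)
      ≤ |1 / Gamma (α / 2)| * (CN * 2 ^ (N - 1) * (1 + d / ρ u) ^ (-N) * (K * d ^ (α - Q))) := by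
        gcongr
    _ = c * (1 + d / ρ u) ^ (-N) * d ^ (α - Q) := by ring
    _ ≤ (c + 1) * (1 + d / ρ u) ^ (-N) * d ^ (α - Q) := by gcongr; linarith

theorem schrodinger_fractional_kernel_bound (n : ℕ) (Q : ℝ) (hQ : Q = 2 * n + 2)
    (α : ℝ) (hα : 0 < α) (hαQ : α < Q)
    (ρ : Heis n → ℝ) (hρ : ∀ u, 0 < ρ u) (A : ℝ) (hA : 0 < A)
    (N : ℝ) (hN : 1 ≤ N) (CN : ℝ) (hCN : 0 < CN)
    (P : ℝ → Heis n → Heis n → ℝ)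
    (hP0 : ∀ s (u v : Heis n), 0 < s → 0 ≤ P s u v)
    (hPbound : ∀ s (u v : Heis n), 0 < s →
      P s u v ≤ CN * s ^ (-(Q / 2)) * Real.exp (-(Hnorm (Hmul (Hinv v) u)) ^ 2 / (A * s)) *
        (1 + Real.sqrt s / ρ u) ^ (-N)) :
    ∃ C > 0, ∀ u v : Heis n, u ≠ v →
      |(1 / Real.Gamma (α / 2)) * ∫ s in Ioi (0 : ℝ), P s u v * s ^ (α / 2 - 1)| ≤
        C * (1 + Hnorm (Hmul (Hinv v) u) / ρ u) ^ (-N) *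
          Hnorm (Hmul (Hinv v) u) ^ (α - Q) :=
  schrodinger_fractional_kernel_bound_general n Q α hαQ ρ hρ A hA N hN CN hCN P hP0 hPbound
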